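/- arXiv:2603.04544 — 5 statements merged into one kernel-verified Lean document; each statement's English description precedes it below -/
import Mathlib

section
/- Inverse probability of censoring weighting (IPCW) unbiasedness under conditionally independent censoring: Let T* and C be random variables taking finitely many values in ℕ, fix t ∈ ℕ and values z ∈ 𝒵, x ∈ 𝒳 with P(Z = z, X = x, R = 1) > 0, and write B for the event {Z = z, X = x, R = 1}. Assume that, conditionally on B, the random variables C and T* are independent (i.e., P(T* = s, C = c | B) = P(T* = s | B)·P(C = c | B) for all s, c), and that G(s) := P(C ≥ s | B) > 0 for every s ≤ t with P(T* = s | B) > 0. Then E[ 1(T* ≤ C)·1(T* ≤ t)/G(T*) | B ] = P(T* ≤ t | B). -/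
open Finset

noncomputable section

open scoped Classical

variable {Ω : Type*} [Fintype Ω]

/-- Probability of an event `A` under the weight function `p`. -/
def pr (p : Ω → ℝ) (A : Ω → Prop) : ℝ := ∑ ω, if A ω then p ω else 0

/-- Expectation of a real random variable `Y` under the weight function `p`. -/
def ex (p : Ω → ℝ) (Y : Ω → ℝ) : ℝ := ∑ ω, p ω * Y ω

/-- Conditional probability `P(A | B)`. -/
def cpr (p : Ω → ℝ) (A B : Ω → Prop) : ℝ := pr p (fun ω => A ω ∧ B ω) / pr p B

/-- Conditional expectation `E[Y | B]`. -/
def cex (p : Ω → ℝ) (Y : Ω → ℝ) (B : Ω → Prop) : ℝ :=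
  (∑ ω, if B ω then p ω * Y ω else 0) / pr p B

lemma pr_nonneg (p : Ω → ℝ) (hp : ∀ ω, 0 ≤ p ω) (A : Ω → Prop) : 0 ≤ pr p A :=
  Finset.sum_nonneg fun ω _ => by by_cases h : A ω <;> simp [pr, h, hp ω]

lemma pr_congr (p : Ω → ℝ) {A A' : Ω → Prop} (h : ∀ ω, A ω ↔ A' ω) : pr p A = pr p A' := by
  simp only [pr]
  exact Finset.sum_congr rfl fun ω _ => by simp only [h ω]

/-- Decompose `pr` of an event depending on a ℕ-valued map `f` over the fibers of `f`. -/
lemma pr_fiber_nat (p : Ω → ℝ) (B : Ω → Prop) (f : Ω → ℕ) (A : ℕ → Prop) :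
    pr p (fun ω => A (f ω) ∧ B ω)
      = ∑ s ∈ Finset.image f Finset.univ,
          if A s then pr p (fun ω => f ω = s ∧ B ω) else 0 := by
  classical
  simp only [pr]
  refine Eq.trans (Finset.sum_fiberwise_of_maps_to
      (g := f) (t := Finset.image f Finset.univ)
      (fun ω _ => Finset.mem_image_of_mem f (Finset.mem_univ ω)) _).symm ?_
  refine Finset.sum_congr rfl fun s _ => ?_
  by_cases hAs : A s
  · rw [if_pos hAs, Finset.sum_filter]
    refine Finset.sum_congr rfl fun ω _ => ?_
    by_cases h : f ω = s
    · simp [h, hAs]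
    · simp [h]
  · rw [if_neg hAs]
    refine Finset.sum_eq_zero fun ω hω => ?_
    have hs' : f ω = s := by simpa using (Finset.mem_filter.mp hω).2
    simp [hs', hAs]

/-- IPCW unbiasedness under conditionally independent censoring. -/
theorem ipcw_unbiasedness
    {𝒵 𝒳 : Type*} [Fintype 𝒵] [Fintype 𝒳]
    (p : Ω → ℝ) (hp : ∀ ω, 0 ≤ p ω) (hp1 : ∑ ω, p ω = 1)
    (R : Ω → Bool) (Z : Ω → 𝒵) (X : Ω → 𝒳)
    (Tstar C : Ω → ℕ) (t : ℕ) (z : 𝒵) (x : 𝒳)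
    (B : Ω → Prop) (hB : B = fun ω => Z ω = z ∧ X ω = x ∧ R ω = true)
    (hBpos : 0 < pr p B)
    (hindep : ∀ s c : ℕ,
      cpr p (fun ω => Tstar ω = s ∧ C ω = c) B
        = cpr p (fun ω => Tstar ω = s) B * cpr p (fun ω => C ω = c) B)
    (G : ℕ → ℝ) (hG : G = fun s => cpr p (fun ω => s ≤ C ω) B)
    (hGpos : ∀ s ≤ t, 0 < cpr p (fun ω => Tstar ω = s) B → 0 < G s) :
    cex p (fun ω => (if Tstar ω ≤ C ω then (1 : ℝ) else 0)
        * (if Tstar ω ≤ t then (1 : ℝ) else 0) / G (Tstar ω)) B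
      = cpr p (fun ω => Tstar ω ≤ t) B := by
  classical
  have hprB : pr p B ≠ 0 := ne_of_gt hBpos
  set S : Finset ℕ := Finset.image Tstar Finset.univ with hSdef
  set Cs : Finset ℕ := Finset.image C Finset.univ with hCsdef
  set a : ℕ → ℝ := fun s => cpr p (fun ω => Tstar ω = s) B with hadef
  set b : ℕ → ℝ := fun c => cpr p (fun ω => C ω = c) B with hbdef
  -- pr(A ∧ B) = cpr A B * pr B
  have hAB : ∀ A : Ω → Prop, pr p (fun ω => A ω ∧ B ω) = cpr p A B * pr p B := by
    intro A; unfold cpr; field_simp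
  have ha_nonneg : ∀ s, 0 ≤ a s := fun s =>
    div_nonneg (pr_nonneg p hp _) (le_of_lt hBpos)
  -- joint probability factorizes
  have hjoint : ∀ sc : ℕ × ℕ, pr p (fun ω => (Tstar ω, C ω) = sc ∧ B ω)
      = a sc.1 * b sc.2 * pr p B := by
    intro sc
    have h1 : pr p (fun ω => (Tstar ω, C ω) = sc ∧ B ω)
        = pr p (fun ω => (Tstar ω = sc.1 ∧ C ω = sc.2) ∧ B ω) :=
      pr_congr p fun ω => by rw [Prod.ext_iff]
    rw [h1, hAB (fun ω => Tstar ω = sc.1 ∧ C ω = sc.2), hindep sc.1 sc.2]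
  have haB : ∀ s, pr p (fun ω => Tstar ω = s ∧ B ω) = a s * pr p B := by
    intro s; exact hAB (fun ω => Tstar ω = s)
  have hbB : ∀ c, pr p (fun ω => C ω = c ∧ B ω) = b c * pr p B := by
    intro c; exact hAB (fun ω => C ω = c)
  -- marginal sum for C
  have hGsum : ∀ s : ℕ,
      (∑ c ∈ Cs, if s ≤ c then b c * pr p B else 0) = G s * pr p B := by
    intro s
    have h1 : pr p (fun ω => s ≤ C ω ∧ B ω) = G s * pr p B := by
      rw [hG]; exact hAB (fun ω => s ≤ C ω)
    rw [← h1, pr_fiber_nat p B C (fun c => s ≤ c)]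
    refine Finset.sum_congr rfl fun c _ => ?_
    by_cases hsc : s ≤ c
    · rw [if_pos hsc, if_pos hsc, hbB c]
    · rw [if_neg hsc, if_neg hsc]
  -- the per-fiber value of the numerator
  have hfiber : ∀ sc : ℕ × ℕ,
      (∑ ω ∈ Finset.univ.filter (fun ω => (Tstar ω, C ω) = sc),
        if B ω then p ω * ((if Tstar ω ≤ C ω then (1:ℝ) else 0)
          * (if Tstar ω ≤ t then (1:ℝ) else 0) / G (Tstar ω)) else 0)
      = ((if sc.1 ≤ sc.2 then (1:ℝ) else 0) * (if sc.1 ≤ t then (1:ℝ) else 0) / G sc.1)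
        * (a sc.1 * b sc.2 * pr p B) := by
    intro sc
    rw [← hjoint sc]
    have hpr : pr p (fun ω => (Tstar ω, C ω) = sc ∧ B ω)
        = ∑ ω ∈ Finset.univ.filter (fun ω => (Tstar ω, C ω) = sc),
            (if B ω then p ω else 0) := by
      simp only [pr]
      rw [Finset.sum_filter]
      refine Finset.sum_congr rfl fun ω _ => ?_
      split_ifs with h1 h2 h3 <;> first | rfl | tauto
    rw [hpr, Finset.mul_sum]
    refine Finset.sum_congr rfl fun ω hω => ?_
    have h : (Tstar ω, C ω) = sc := (Finset.mem_filter.mp hω).2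
    have h1 : Tstar ω = sc.1 := by rw [← h]
    have h2 : C ω = sc.2 := by rw [← h]
    simp only [h1, h2]
    split_ifs <;> ring
  -- evaluate the inner sum over c
  have hinner : ∀ s ∈ S,
      (∑ c ∈ Cs, ((if s ≤ c then (1:ℝ) else 0) * (if s ≤ t then (1:ℝ) else 0) / G s)
        * (a s * b c * pr p B))
      = (if s ≤ t then pr p (fun ω => Tstar ω = s ∧ B ω) else 0) := by
    intro s _
    have hsum : (∑ c ∈ Cs, ((if s ≤ c then (1:ℝ) else 0) * (if s ≤ t then (1:ℝ) else 0) / G s)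
          * (a s * b c * pr p B))
        = (if s ≤ t then (1:ℝ) else 0) * ((a s / G s) * (G s * pr p B)) := by
      rw [← hGsum s, Finset.mul_sum, Finset.mul_sum]
      refine Finset.sum_congr rfl fun c _ => ?_
      split_ifs <;> ring
    rw [hsum, haB s]
    by_cases hst : s ≤ t
    · rw [if_pos hst, if_pos hst, one_mul]
      rcases lt_or_eq_of_le (ha_nonneg s) with hpos | hzero
      · have hGs : G s ≠ 0 := ne_of_gt (hGpos s hst hpos)
        field_simp
      · rw [← hzero]; ring
    · rw [if_neg hst, if_neg hst, zero_mul]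
  -- put everything together
  unfold cex
  rw [div_eq_iff hprB]
  have hRHS : cpr p (fun ω => Tstar ω ≤ t) B * pr p B
      = ∑ s ∈ S, if s ≤ t then pr p (fun ω => Tstar ω = s ∧ B ω) else 0 := by
    rw [← hAB (fun ω => Tstar ω ≤ t)]
    refine (pr_fiber_nat p B Tstar (fun s => s ≤ t)).trans
      (Finset.sum_congr rfl fun s _ => ?_)
    rw [Subsingleton.elim (Classical.propDecidable (s ≤ t)) (s.decLe t)]
  rw [hRHS]
  refine Eq.trans
    ((Finset.sum_fiberwise_of_maps_to
      (g := fun ω => (Tstar ω, C ω)) (t := S ×ˢ Cs)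
      (fun ω _ => Finset.mem_product.mpr
        ⟨Finset.mem_image_of_mem Tstar (Finset.mem_univ ω),
         Finset.mem_image_of_mem C (Finset.mem_univ ω)⟩)
      _).symm) ?_
  refine Eq.trans (Finset.sum_congr rfl fun sc _ => hfiber sc) ?_
  refine Eq.trans (Finset.sum_product _ _ _) ?_
  exact Finset.sum_congr rfl hinner
end
end

section
/- Outcome-bridge proximal identification of the counterfactual event probability with right censoring (discrete version of Theorem 1, equation (3)): Let T₀ and C be random variables taking finitely many values in ℕ (the event time under placebo and the censoring time), set Δ := 1(T₀ ≤ C), and fix t ∈ ℕ. Assume: (i) negative control assumption: (T₀, W) ⫫ (Z, R) | (U, X); (ii) censoring at random in the external study: for every (z, x) with P(Z = z, X = x, R = 1) > 0, conditionally on the event {Z = z, X = x, R = 1} the variable C is independent of (T₀, U, W), and G(s | z, x) := P(C ≥ s | Z = z, X = x, R = 1) > 0 for every s ≤ t with P(T₀ = s | Z = z, X = x, R = 1) > 0; (iii) positivity: for all (u, x), P(U = u, X = x, R = 0) > 0 implies P(U = u, X = x, R = 1) > 0; (iv) completeness: for every x ∈ 𝒳 and every function g : 𝒰 → ℝ, if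 E[g(U) | Z = z, X = x, R = 1] = 0 for every z with P(Z = z, X = x, R = 1) > 0, then g(u) = 0 for every u with P(U = u, X = x, R = 1) > 0; (v) the outcome bridge function h : 𝒲 × 𝒳 → ℝ satisfies, for every (z, x) with P(Z = z, X = x, R = 1) > 0, E[ Δ·1(T₀ ≤ t)/G(T₀ | z, x) | Z = z, X = x, R = 1 ] = E[ h(W, X) | Z = z, X = x, R = 1 ]. If P(R = 0) > 0, then P(T₀ ≤ t | R = 0) = E[ h(W, X) | R = 0 ]. -/
open Finset

noncomputable section

open scoped Classical

variable {Ω : Type*} [Fintype Ω]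

namespace OBI

/-- numerator of `cex`. -/
def nsum (p : Ω → ℝ) (Y : Ω → ℝ) (B : Ω → Prop) : ℝ :=
  ∑ ω, if B ω then p ω * Y ω else 0

lemma cex_eq (p : Ω → ℝ) (Y : Ω → ℝ) (B : Ω → Prop) :
    cex p Y B = nsum p Y B / pr p B := rfl

lemma cpr_eq (p : Ω → ℝ) (A B : Ω → Prop) :
    cpr p A B = pr p (fun ω => A ω ∧ B ω) / pr p B := rfl

lemma pr_nonneg (p : Ω → ℝ) (hp : ∀ ω, 0 ≤ p ω) (A : Ω → Prop) : 0 ≤ pr p A := by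
  refine Finset.sum_nonneg fun ω _ => ?_
  split_ifs
  · exact hp ω
  · exact le_refl 0

lemma pr_congr (p : Ω → ℝ) {A B : Ω → Prop} (h : ∀ ω, A ω ↔ B ω) : pr p A = pr p B :=
  Finset.sum_congr rfl fun ω _ => if_congr (h ω) rfl rfl

lemma pr_mono (p : Ω → ℝ) (hp : ∀ ω, 0 ≤ p ω) {A B : Ω → Prop}
    (h : ∀ ω, A ω → B ω) : pr p A ≤ pr p B := by
  refine Finset.sum_le_sum fun ω _ => ?_
  by_cases hA : A ω
  · rw [if_pos hA, if_pos (h ω hA)]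
  · rw [if_neg hA]
    split_ifs
    · exact hp ω
    · exact le_refl 0

lemma pr_zero (p : Ω → ℝ) (hp : ∀ ω, 0 ≤ p ω) {A B : Ω → Prop}
    (h : ∀ ω, A ω → B ω) (hB : pr p B = 0) : pr p A = 0 :=
  le_antisymm (hB ▸ pr_mono p hp h) (pr_nonneg p hp A)

lemma nsum_congr (p : Ω → ℝ) {B B' : Ω → Prop} {Y Y' : Ω → ℝ}
    (hB : ∀ ω, B ω ↔ B' ω) (hY : ∀ ω, B ω → Y ω = Y' ω) :
    nsum p Y B = nsum p Y' B' := by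
  refine Finset.sum_congr rfl fun ω _ => ?_
  by_cases h : B ω
  · rw [if_pos h, if_pos ((hB ω).1 h), hY ω h]
  · rw [if_neg h, if_neg (fun h' => h ((hB ω).2 h'))]

lemma cex_congr (p : Ω → ℝ) {Y Y' : Ω → ℝ} {B : Ω → Prop}
    (h : ∀ ω, B ω → Y ω = Y' ω) : cex p Y B = cex p Y' B := by
  rw [cex_eq, cex_eq, nsum_congr p (fun ω => Iff.rfl) h]

lemma nsum_fiber {𝒱 : Type*} (p : Ω → ℝ) (V : Ω → 𝒱) (S : Finset 𝒱)
    (hS : ∀ ω, V ω ∈ S) (F : 𝒱 → ℝ) (B : Ω → Prop) :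
    nsum p (fun ω => F (V ω)) B
      = ∑ v ∈ S, F v * pr p (fun ω => V ω = v ∧ B ω) := by
  have h1 : ∀ v, F v * pr p (fun ω => V ω = v ∧ B ω)
      = ∑ ω, if V ω = v ∧ B ω then F v * p ω else 0 := by
    intro v
    rw [pr, Finset.mul_sum]
    exact Finset.sum_congr rfl fun ω _ => by split_ifs <;> ring
  simp_rw [h1]
  rw [nsum, Finset.sum_comm]
  refine Finset.sum_congr rfl fun ω _ => ?_
  by_cases h : B ω
  · simp [h, Finset.sum_ite_eq, hS ω, mul_comm]
  · simp [h]

lemma pr_total {𝒱 : Type*} [Fintype 𝒱] (p : Ω → ℝ) (V : Ω → 𝒱) (B : Ω → Prop) :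
    ∑ v, pr p (fun ω => V ω = v ∧ B ω) = pr p B := by
  have h0 : pr p B = nsum p (fun _ => (1:ℝ)) B := by
    rw [pr, nsum]
    exact Finset.sum_congr rfl fun ω _ => by split_ifs <;> ring
  rw [h0, nsum_fiber p V Finset.univ (fun ω => Finset.mem_univ _) (fun _ => (1:ℝ)) B]
  exact Finset.sum_congr rfl fun v _ => by rw [one_mul]

lemma nsum_split {𝒱 : Type*} [Fintype 𝒱] (p : Ω → ℝ) (V : Ω → 𝒱) (Y : Ω → ℝ)
    (B : Ω → Prop) :
    nsum p Y B = ∑ v, nsum p Y (fun ω => V ω = v ∧ B ω) := by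
  rw [nsum]
  simp_rw [nsum]
  rw [Finset.sum_comm]
  refine Finset.sum_congr rfl fun ω _ => ?_
  by_cases h : B ω
  · simp [h, Finset.sum_ite_eq]
  · simp [h]

lemma nsum_indicator (p : Ω → ℝ) (A B : Ω → Prop) [inst : ∀ ω, Decidable (A ω)] :
    nsum p (fun ω => if A ω then (1:ℝ) else 0) B = pr p (fun ω => A ω ∧ B ω) := by
  rw [nsum, pr]
  refine Finset.sum_congr rfl fun ω _ => ?_
  by_cases hA : A ω <;> by_cases hB : B ω <;> simp [hA, hB]

lemma cex_indicator (p : Ω → ℝ) (A B : Ω → Prop) [inst : ∀ ω, Decidable (A ω)] :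
    cex p (fun ω => if A ω then (1:ℝ) else 0) B = cpr p A B := by
  rw [cex_eq, cpr_eq, nsum_indicator]

lemma cross (p : Ω → ℝ) (hp : ∀ ω, 0 ≤ p ω) (A B C : Ω → Prop)
    (h : 0 < pr p C → cpr p (fun ω => A ω ∧ B ω) C = cpr p A C * cpr p B C) :
    pr p (fun ω => (A ω ∧ B ω) ∧ C ω) * pr p C
      = pr p (fun ω => A ω ∧ C ω) * pr p (fun ω => B ω ∧ C ω) := by
  rcases (pr_nonneg p hp C).eq_or_lt with h0 | h0
  · have hA : pr p (fun ω => A ω ∧ C ω) = 0 :=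
      pr_zero p hp (fun ω hω => hω.2) h0.symm
    rw [← h0, hA, mul_zero, zero_mul]
  · have hC := h0.ne'
    have := h h0
    unfold cpr at this
    field_simp at this
    have h2 : (pr p fun ω => (A ω ∧ B ω) ∧ C ω) * pr p C * pr p C
        = (pr p fun ω => A ω ∧ C ω) * (pr p fun ω => B ω ∧ C ω) * pr p C := by
      linear_combination (pr p C) * this
    exact mul_right_cancel₀ hC h2

lemma tower {𝒰 𝒲 𝒳 : Type*} [Fintype 𝒰] [Fintype 𝒲]
    (p : Ω → ℝ) (hp : ∀ ω, 0 ≤ p ω)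
    (T0 : Ω → ℕ) (W : Ω → 𝒲) (U : Ω → 𝒰) (X : Ω → 𝒳)
    (D : Ω → Prop) (x : 𝒳) (F : ℕ → 𝒲 → ℝ)
    (hcross : ∀ (s : ℕ) (w : 𝒲) (u : 𝒰),
      pr p (fun ω => ((T0 ω = s ∧ W ω = w) ∧ D ω) ∧ (U ω = u ∧ X ω = x))
        * pr p (fun ω => U ω = u ∧ X ω = x)
      = pr p (fun ω => (T0 ω = s ∧ W ω = w) ∧ (U ω = u ∧ X ω = x))
        * pr p (fun ω => D ω ∧ (U ω = u ∧ X ω = x))) :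
    nsum p (fun ω => F (T0 ω) (W ω)) (fun ω => D ω ∧ X ω = x)
      = ∑ u, pr p (fun ω => D ω ∧ (U ω = u ∧ X ω = x))
          * cex p (fun ω => F (T0 ω) (W ω)) (fun ω => U ω = u ∧ X ω = x) := by
  rw [nsum_split p U (fun ω => F (T0 ω) (W ω)) (fun ω => D ω ∧ X ω = x)]
  refine Finset.sum_congr rfl fun u _ => ?_
  have hS : ∀ ω, (T0 ω, W ω) ∈ (Finset.image T0 Finset.univ) ×ˢ (Finset.univ : Finset 𝒲) :=
    fun ω => Finset.mem_product.mpr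
      ⟨Finset.mem_image_of_mem T0 (Finset.mem_univ ω), Finset.mem_univ _⟩
  have hfib : nsum p (fun ω => F (T0 ω) (W ω)) (fun ω => U ω = u ∧ (D ω ∧ X ω = x))
      = ∑ v ∈ (Finset.image T0 Finset.univ) ×ˢ (Finset.univ : Finset 𝒲),
          F v.1 v.2 * pr p (fun ω => (T0 ω, W ω) = v ∧ (U ω = u ∧ (D ω ∧ X ω = x))) :=
    nsum_fiber p (fun ω => (T0 ω, W ω)) _ hS (fun v => F v.1 v.2) _
  have hnum : nsum p (fun ω => F (T0 ω) (W ω)) (fun ω => U ω = u ∧ X ω = x)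
      = ∑ v ∈ (Finset.image T0 Finset.univ) ×ˢ (Finset.univ : Finset 𝒲),
          F v.1 v.2 * pr p (fun ω => (T0 ω, W ω) = v ∧ (U ω = u ∧ X ω = x)) :=
    nsum_fiber p (fun ω => (T0 ω, W ω)) _ hS (fun v => F v.1 v.2) _
  have hcex : cex p (fun ω => F (T0 ω) (W ω)) (fun ω => U ω = u ∧ X ω = x)
      = (∑ v ∈ (Finset.image T0 Finset.univ) ×ˢ (Finset.univ : Finset 𝒲),
          F v.1 v.2 * pr p (fun ω => (T0 ω, W ω) = v ∧ (U ω = u ∧ X ω = x)))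
        / pr p (fun ω => U ω = u ∧ X ω = x) := by
    rw [cex_eq, hnum]
  refine Eq.trans hfib ?_
  rcases (pr_nonneg p hp (fun ω => U ω = u ∧ X ω = x)).eq_or_lt with h0 | h0
  · have hD0 : pr p (fun ω => D ω ∧ (U ω = u ∧ X ω = x)) = 0 :=
      pr_zero p hp (fun ω hω => hω.2) h0.symm
    rw [hD0, zero_mul]
    refine Finset.sum_eq_zero fun v _ => ?_
    have hv : pr p (fun ω => (T0 ω, W ω) = v ∧ (U ω = u ∧ (D ω ∧ X ω = x))) = 0 :=
      pr_zero p hp (fun ω hω => ⟨hω.2.1, hω.2.2.2⟩) h0.symm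
    rw [hv, mul_zero]
  · have hm := h0.ne'
    have key : (∑ v ∈ (Finset.image T0 Finset.univ) ×ˢ (Finset.univ : Finset 𝒲),
          F v.1 v.2 * pr p (fun ω => (T0 ω, W ω) = v ∧ (U ω = u ∧ (D ω ∧ X ω = x))))
          * pr p (fun ω => U ω = u ∧ X ω = x)
        = (∑ v ∈ (Finset.image T0 Finset.univ) ×ˢ (Finset.univ : Finset 𝒲),
            F v.1 v.2 * pr p (fun ω => (T0 ω, W ω) = v ∧ (U ω = u ∧ X ω = x)))
          * pr p (fun ω => D ω ∧ (U ω = u ∧ X ω = x)) := by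
      rw [Finset.sum_mul, Finset.sum_mul]
      refine Finset.sum_congr rfl fun v _ => ?_
      have e1 : pr p (fun ω => (T0 ω, W ω) = v ∧ (U ω = u ∧ (D ω ∧ X ω = x)))
          = pr p (fun ω => ((T0 ω = v.1 ∧ W ω = v.2) ∧ D ω) ∧ (U ω = u ∧ X ω = x)) :=
        pr_congr p fun ω => by simp only [Prod.ext_iff]; try tauto
      have e2 : pr p (fun ω => (T0 ω, W ω) = v ∧ (U ω = u ∧ X ω = x))
          = pr p (fun ω => (T0 ω = v.1 ∧ W ω = v.2) ∧ (U ω = u ∧ X ω = x)) :=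
        pr_congr p fun ω => by simp only [Prod.ext_iff]; try tauto
      rw [e1, e2, mul_assoc, hcross v.1 v.2 u]
      ring
    rw [hcex]
    field_simp
    linear_combination key

end OBI

/-- Outcome-bridge proximal identification of the counterfactual event probability
with right censoring (discrete version of Theorem 1, equation (3)). -/
theorem outcome_bridge_identification
    {𝒳 𝒰 𝒵 𝒲 : Type*} [Fintype 𝒳] [Fintype 𝒰] [Fintype 𝒵] [Fintype 𝒲]
    (p : Ω → ℝ) (hp : ∀ ω, 0 ≤ p ω) (hp1 : ∑ ω, p ω = 1)
    (R : Ω → Bool) (X : Ω → 𝒳) (U : Ω → 𝒰) (Z : Ω → 𝒵) (W : Ω → 𝒲)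
    (T0 C : Ω → ℕ) (t : ℕ) (h : 𝒲 → 𝒳 → ℝ)
    (G : 𝒵 → 𝒳 → ℕ → ℝ)
    (hG : ∀ (z : 𝒵) (x : 𝒳) (s : ℕ),
      G z x s = cpr p (fun ω => s ≤ C ω) (fun ω => Z ω = z ∧ X ω = x ∧ R ω = true))
    -- (i) negative control assumption: (T₀, W) ⫫ (Z, R) | (U, X)
    (hNC : ∀ (s : ℕ) (w : 𝒲) (z : 𝒵) (r : Bool) (u : 𝒰) (x : 𝒳),
      0 < pr p (fun ω => U ω = u ∧ X ω = x) →
      cpr p (fun ω => (T0 ω = s ∧ W ω = w) ∧ (Z ω = z ∧ R ω = r))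
          (fun ω => U ω = u ∧ X ω = x)
        = cpr p (fun ω => T0 ω = s ∧ W ω = w) (fun ω => U ω = u ∧ X ω = x)
          * cpr p (fun ω => Z ω = z ∧ R ω = r) (fun ω => U ω = u ∧ X ω = x))
    -- (ii) censoring at random in the external study
    (hCAR : ∀ (z : 𝒵) (x : 𝒳), 0 < pr p (fun ω => Z ω = z ∧ X ω = x ∧ R ω = true) →
      ∀ (c s : ℕ) (u : 𝒰) (w : 𝒲),
        cpr p (fun ω => C ω = c ∧ (T0 ω = s ∧ U ω = u ∧ W ω = w))
            (fun ω => Z ω = z ∧ X ω = x ∧ R ω = true)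
          = cpr p (fun ω => C ω = c) (fun ω => Z ω = z ∧ X ω = x ∧ R ω = true)
            * cpr p (fun ω => T0 ω = s ∧ U ω = u ∧ W ω = w)
                (fun ω => Z ω = z ∧ X ω = x ∧ R ω = true))
    (hGpos : ∀ (z : 𝒵) (x : 𝒳), 0 < pr p (fun ω => Z ω = z ∧ X ω = x ∧ R ω = true) →
      ∀ s ≤ t, 0 < cpr p (fun ω => T0 ω = s) (fun ω => Z ω = z ∧ X ω = x ∧ R ω = true) →
        0 < G z x s)
    -- (iii) positivity
    (hPos : ∀ (u : 𝒰) (x : 𝒳),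
      0 < pr p (fun ω => U ω = u ∧ X ω = x ∧ R ω = false) →
      0 < pr p (fun ω => U ω = u ∧ X ω = x ∧ R ω = true))
    -- (iv) completeness
    (hComp : ∀ (x : 𝒳) (g : 𝒰 → ℝ),
      (∀ z : 𝒵, 0 < pr p (fun ω => Z ω = z ∧ X ω = x ∧ R ω = true) →
        cex p (fun ω => g (U ω)) (fun ω => Z ω = z ∧ X ω = x ∧ R ω = true) = 0) →
      ∀ u : 𝒰, 0 < pr p (fun ω => U ω = u ∧ X ω = x ∧ R ω = true) → g u = 0)
    -- (v) observed outcome bridge equation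
    (hBridge : ∀ (z : 𝒵) (x : 𝒳), 0 < pr p (fun ω => Z ω = z ∧ X ω = x ∧ R ω = true) →
      cex p (fun ω => (if T0 ω ≤ C ω then (1 : ℝ) else 0)
            * (if T0 ω ≤ t then (1 : ℝ) else 0) / G z x (T0 ω))
          (fun ω => Z ω = z ∧ X ω = x ∧ R ω = true)
        = cex p (fun ω => h (W ω) (X ω)) (fun ω => Z ω = z ∧ X ω = x ∧ R ω = true))
    (hR0 : 0 < pr p (fun ω => R ω = false)) :
    cpr p (fun ω => T0 ω ≤ t) (fun ω => R ω = false)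
      = cex p (fun ω => h (W ω) (X ω)) (fun ω => R ω = false) := by
  classical
  -- Step A : IPCW identity
  have stepA : ∀ (z : 𝒵) (x : 𝒳),
      0 < pr p (fun ω => Z ω = z ∧ X ω = x ∧ R ω = true) →
      cex p (fun ω => (if T0 ω ≤ C ω then (1 : ℝ) else 0)
            * (if T0 ω ≤ t then (1 : ℝ) else 0) / G z x (T0 ω))
          (fun ω => Z ω = z ∧ X ω = x ∧ R ω = true)
        = cpr p (fun ω => T0 ω ≤ t) (fun ω => Z ω = z ∧ X ω = x ∧ R ω = true) := by
    intro z x hE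
    have hEne : pr p (fun ω => Z ω = z ∧ X ω = x ∧ R ω = true) ≠ 0 := hE.ne'
    have hCARx : ∀ (c s : ℕ),
        pr p (fun ω => (T0 ω = s ∧ C ω = c) ∧ (Z ω = z ∧ X ω = x ∧ R ω = true))
          * pr p (fun ω => Z ω = z ∧ X ω = x ∧ R ω = true)
        = pr p (fun ω => C ω = c ∧ (Z ω = z ∧ X ω = x ∧ R ω = true))
          * pr p (fun ω => T0 ω = s ∧ (Z ω = z ∧ X ω = x ∧ R ω = true)) := by
      intro c s
      have hcr : ∀ v : 𝒰 × 𝒲,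
          pr p (fun ω => (U ω, W ω) = v ∧ ((T0 ω = s ∧ C ω = c) ∧ (Z ω = z ∧ X ω = x ∧ R ω = true)))
            * pr p (fun ω => Z ω = z ∧ X ω = x ∧ R ω = true)
          = pr p (fun ω => C ω = c ∧ (Z ω = z ∧ X ω = x ∧ R ω = true))
            * pr p (fun ω => (U ω, W ω) = v ∧ (T0 ω = s ∧ (Z ω = z ∧ X ω = x ∧ R ω = true))) := by
        intro v
        have hc := OBI.cross p hp (fun ω => C ω = c) (fun ω => T0 ω = s ∧ U ω = v.1 ∧ W ω = v.2)
          (fun ω => Z ω = z ∧ X ω = x ∧ R ω = true) (fun h0 => hCAR z x h0 c s v.1 v.2)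
        have e1 : pr p (fun ω => (U ω, W ω) = v ∧ ((T0 ω = s ∧ C ω = c) ∧ (Z ω = z ∧ X ω = x ∧ R ω = true)))
            = pr p (fun ω => (C ω = c ∧ (T0 ω = s ∧ U ω = v.1 ∧ W ω = v.2)) ∧ (Z ω = z ∧ X ω = x ∧ R ω = true)) :=
          OBI.pr_congr p fun ω => by simp only [Prod.ext_iff]; try tauto
        have e2 : pr p (fun ω => (U ω, W ω) = v ∧ (T0 ω = s ∧ (Z ω = z ∧ X ω = x ∧ R ω = true)))
            = pr p (fun ω => (T0 ω = s ∧ U ω = v.1 ∧ W ω = v.2) ∧ (Z ω = z ∧ X ω = x ∧ R ω = true)) :=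
          OBI.pr_congr p fun ω => by simp only [Prod.ext_iff]; try tauto
        rw [e1, e2]
        exact hc
      have hsum := Finset.sum_congr rfl fun (v : 𝒰 × 𝒲) (_ : v ∈ (Finset.univ : Finset (𝒰 × 𝒲))) => hcr v
      rw [← Finset.sum_mul, ← Finset.mul_sum,
        OBI.pr_total p (fun ω => (U ω, W ω)), OBI.pr_total p (fun ω => (U ω, W ω))] at hsum
      exact hsum
    rw [OBI.cex_eq, OBI.cpr_eq, div_eq_div_iff hEne hEne]
    have hfib0 : OBI.nsum p (fun ω => (if T0 ω ≤ C ω then (1 : ℝ) else 0)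
          * (if T0 ω ≤ t then (1 : ℝ) else 0) / G z x (T0 ω))
        (fun ω => Z ω = z ∧ X ω = x ∧ R ω = true)
        = ∑ v ∈ (Finset.image T0 Finset.univ) ×ˢ (Finset.image C Finset.univ),
            ((if v.1 ≤ v.2 then (1 : ℝ) else 0) * (if v.1 ≤ t then (1 : ℝ) else 0) / G z x v.1)
              * pr p (fun ω => (T0 ω, C ω) = v ∧ (Z ω = z ∧ X ω = x ∧ R ω = true)) :=
      OBI.nsum_fiber p (fun ω => (T0 ω, C ω)) _
        (fun ω => Finset.mem_product.mpr
          ⟨Finset.mem_image_of_mem T0 (Finset.mem_univ ω), Finset.mem_image_of_mem C (Finset.mem_univ ω)⟩)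
        (fun v => (if v.1 ≤ v.2 then (1 : ℝ) else 0) * (if v.1 ≤ t then (1 : ℝ) else 0) / G z x v.1) _
    rw [hfib0, Finset.sum_mul]
    have hterm : ∀ v ∈ (Finset.image T0 Finset.univ) ×ˢ (Finset.image C Finset.univ),
        ((if v.1 ≤ v.2 then (1 : ℝ) else 0) * (if v.1 ≤ t then (1 : ℝ) else 0) / G z x v.1)
          * pr p (fun ω => (T0 ω, C ω) = v ∧ (Z ω = z ∧ X ω = x ∧ R ω = true))
          * pr p (fun ω => Z ω = z ∧ X ω = x ∧ R ω = true)
        = ((if v.1 ≤ v.2 then (1 : ℝ) else 0) * (if v.1 ≤ t then (1 : ℝ) else 0) / G z x v.1)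
          * (pr p (fun ω => C ω = v.2 ∧ (Z ω = z ∧ X ω = x ∧ R ω = true))
            * pr p (fun ω => T0 ω = v.1 ∧ (Z ω = z ∧ X ω = x ∧ R ω = true))) := by
      intro v _
      have e1 : pr p (fun ω => (T0 ω, C ω) = v ∧ (Z ω = z ∧ X ω = x ∧ R ω = true))
          = pr p (fun ω => (T0 ω = v.1 ∧ C ω = v.2) ∧ (Z ω = z ∧ X ω = x ∧ R ω = true)) :=
        OBI.pr_congr p fun ω => by simp only [Prod.ext_iff]; try tauto
      rw [e1, mul_assoc, hCARx v.2 v.1]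
    rw [Finset.sum_congr rfl hterm]
    simp only [Finset.sum_product]
    have hGs : ∀ s : ℕ,
        (∑ c ∈ Finset.image C Finset.univ,
          (if s ≤ c then (1 : ℝ) else 0) * pr p (fun ω => C ω = c ∧ (Z ω = z ∧ X ω = x ∧ R ω = true)))
        = G z x s * pr p (fun ω => Z ω = z ∧ X ω = x ∧ R ω = true) := by
      intro s
      have h1 : OBI.nsum p (fun ω => if s ≤ C ω then (1 : ℝ) else 0)
            (fun ω => Z ω = z ∧ X ω = x ∧ R ω = true)
          = ∑ c ∈ Finset.image C Finset.univ,
              (if s ≤ c then (1 : ℝ) else 0) * pr p (fun ω => C ω = c ∧ (Z ω = z ∧ X ω = x ∧ R ω = true)) :=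
        OBI.nsum_fiber p C _ (fun ω => Finset.mem_image_of_mem C (Finset.mem_univ ω))
          (fun c => if s ≤ c then (1 : ℝ) else 0) _
      rw [OBI.nsum_indicator p (fun ω => s ≤ C ω) (fun ω => Z ω = z ∧ X ω = x ∧ R ω = true)] at h1
      rw [← h1, hG z x s, OBI.cpr_eq, div_mul_cancel₀ _ hEne]
    have houter : ∀ s ∈ Finset.image T0 Finset.univ,
        (∑ c ∈ Finset.image C Finset.univ,
          ((if s ≤ c then (1 : ℝ) else 0) * (if s ≤ t then (1 : ℝ) else 0) / G z x s)
            * (pr p (fun ω => C ω = c ∧ (Z ω = z ∧ X ω = x ∧ R ω = true))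
              * pr p (fun ω => T0 ω = s ∧ (Z ω = z ∧ X ω = x ∧ R ω = true))))
        = (if s ≤ t then (1 : ℝ) else 0)
            * pr p (fun ω => T0 ω = s ∧ (Z ω = z ∧ X ω = x ∧ R ω = true))
            * pr p (fun ω => Z ω = z ∧ X ω = x ∧ R ω = true) := by
      intro s _
      by_cases hst : s ≤ t
      · by_cases hT : pr p (fun ω => T0 ω = s ∧ (Z ω = z ∧ X ω = x ∧ R ω = true)) = 0
        · simp [hT]
        · have hTpos : 0 < pr p (fun ω => T0 ω = s ∧ (Z ω = z ∧ X ω = x ∧ R ω = true)) :=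
            lt_of_le_of_ne (OBI.pr_nonneg p hp _) (Ne.symm hT)
          have hGp : 0 < G z x s := by
            refine hGpos z x hE s hst ?_
            rw [OBI.cpr_eq]
            exact div_pos hTpos hE
          have hre : ∀ c ∈ Finset.image C Finset.univ,
              ((if s ≤ c then (1 : ℝ) else 0) * (if s ≤ t then (1 : ℝ) else 0) / G z x s)
                * (pr p (fun ω => C ω = c ∧ (Z ω = z ∧ X ω = x ∧ R ω = true))
                  * pr p (fun ω => T0 ω = s ∧ (Z ω = z ∧ X ω = x ∧ R ω = true)))
              = (pr p (fun ω => T0 ω = s ∧ (Z ω = z ∧ X ω = x ∧ R ω = true)) / G z x s)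
                * ((if s ≤ c then (1 : ℝ) else 0)
                  * pr p (fun ω => C ω = c ∧ (Z ω = z ∧ X ω = x ∧ R ω = true))) := by
            intro c _
            rw [if_pos hst]
            ring
          rw [Finset.sum_congr rfl hre, ← Finset.mul_sum, hGs s, if_pos hst]
          field_simp
      · simp [hst]
    rw [Finset.sum_congr rfl houter]
    have hfin : pr p (fun ω => T0 ω ≤ t ∧ (Z ω = z ∧ X ω = x ∧ R ω = true))
        = ∑ s ∈ Finset.image T0 Finset.univ,
            (if s ≤ t then (1 : ℝ) else 0)
              * pr p (fun ω => T0 ω = s ∧ (Z ω = z ∧ X ω = x ∧ R ω = true)) := by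
      have h1 : OBI.nsum p (fun ω => if T0 ω ≤ t then (1 : ℝ) else 0)
            (fun ω => Z ω = z ∧ X ω = x ∧ R ω = true)
          = ∑ s ∈ Finset.image T0 Finset.univ,
              (if s ≤ t then (1 : ℝ) else 0)
                * pr p (fun ω => T0 ω = s ∧ (Z ω = z ∧ X ω = x ∧ R ω = true)) :=
        OBI.nsum_fiber p T0 _ (fun ω => Finset.mem_image_of_mem T0 (Finset.mem_univ ω))
          (fun s => if s ≤ t then (1 : ℝ) else 0) _
      rw [OBI.nsum_indicator p (fun ω => T0 ω ≤ t) (fun ω => Z ω = z ∧ X ω = x ∧ R ω = true)] at h1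
      exact h1
    rw [hfin, Finset.sum_mul]
  -- NC cross, D = (Z = z ∧ R = true)
  have hcrossZ : ∀ (z : 𝒵) (x : 𝒳) (s : ℕ) (w : 𝒲) (u : 𝒰),
      pr p (fun ω => ((T0 ω = s ∧ W ω = w) ∧ (Z ω = z ∧ R ω = true)) ∧ (U ω = u ∧ X ω = x))
        * pr p (fun ω => U ω = u ∧ X ω = x)
      = pr p (fun ω => (T0 ω = s ∧ W ω = w) ∧ (U ω = u ∧ X ω = x))
        * pr p (fun ω => (Z ω = z ∧ R ω = true) ∧ (U ω = u ∧ X ω = x)) :=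
    fun z x s w u => OBI.cross p hp (fun ω => T0 ω = s ∧ W ω = w)
      (fun ω => Z ω = z ∧ R ω = true) (fun ω => U ω = u ∧ X ω = x)
      (fun h0 => hNC s w z true u x h0)
  -- NC cross, D = (R = false), obtained by summing over z
  have hcrossR : ∀ (x : 𝒳) (s : ℕ) (w : 𝒲) (u : 𝒰),
      pr p (fun ω => ((T0 ω = s ∧ W ω = w) ∧ R ω = false) ∧ (U ω = u ∧ X ω = x))
        * pr p (fun ω => U ω = u ∧ X ω = x)
      = pr p (fun ω => (T0 ω = s ∧ W ω = w) ∧ (U ω = u ∧ X ω = x))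
        * pr p (fun ω => R ω = false ∧ (U ω = u ∧ X ω = x)) := by
    intro x s w u
    have hz : ∀ z : 𝒵,
        pr p (fun ω => Z ω = z ∧ (((T0 ω = s ∧ W ω = w) ∧ R ω = false) ∧ (U ω = u ∧ X ω = x)))
          * pr p (fun ω => U ω = u ∧ X ω = x)
        = pr p (fun ω => (T0 ω = s ∧ W ω = w) ∧ (U ω = u ∧ X ω = x))
          * pr p (fun ω => Z ω = z ∧ (R ω = false ∧ (U ω = u ∧ X ω = x))) := by
      intro z
      have hc := OBI.cross p hp (fun ω => T0 ω = s ∧ W ω = w) (fun ω => Z ω = z ∧ R ω = false)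
        (fun ω => U ω = u ∧ X ω = x) (fun h0 => hNC s w z false u x h0)
      have e1 : pr p (fun ω => Z ω = z ∧ (((T0 ω = s ∧ W ω = w) ∧ R ω = false) ∧ (U ω = u ∧ X ω = x)))
          = pr p (fun ω => ((T0 ω = s ∧ W ω = w) ∧ (Z ω = z ∧ R ω = false)) ∧ (U ω = u ∧ X ω = x)) :=
        OBI.pr_congr p fun ω => by tauto
      have e2 : pr p (fun ω => Z ω = z ∧ (R ω = false ∧ (U ω = u ∧ X ω = x)))
          = pr p (fun ω => (Z ω = z ∧ R ω = false) ∧ (U ω = u ∧ X ω = x)) :=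
        OBI.pr_congr p fun ω => by tauto
      rw [e1, e2]
      exact hc
    have hsum := Finset.sum_congr rfl fun z (_ : z ∈ (Finset.univ : Finset 𝒵)) => hz z
    rw [← Finset.sum_mul, ← Finset.mul_sum,
      OBI.pr_total p Z, OBI.pr_total p Z] at hsum
    exact hsum
  -- Step B
  have stepB : ∀ (x : 𝒳) (u : 𝒰),
      0 < pr p (fun ω => U ω = u ∧ X ω = x ∧ R ω = true) →
      cex p (fun ω => h (W ω) (X ω)) (fun ω => U ω = u ∧ X ω = x)
        = cpr p (fun ω => T0 ω ≤ t) (fun ω => U ω = u ∧ X ω = x) := by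
    intro x u hu
    have key : ∀ z : 𝒵, 0 < pr p (fun ω => Z ω = z ∧ X ω = x ∧ R ω = true) →
        cex p (fun ω =>
            cex p (fun ω' => h (W ω') (X ω')) (fun ω' => U ω' = U ω ∧ X ω' = x)
              - cpr p (fun ω' => T0 ω' ≤ t) (fun ω' => U ω' = U ω ∧ X ω' = x))
          (fun ω => Z ω = z ∧ X ω = x ∧ R ω = true) = 0 := by
      intro z hEz
      have hEne : pr p (fun ω => Z ω = z ∧ X ω = x ∧ R ω = true) ≠ 0 := hEz.ne'
      have towA : OBI.nsum p (fun ω => h (W ω) x) (fun ω => (Z ω = z ∧ R ω = true) ∧ X ω = x)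
          = ∑ u', pr p (fun ω => (Z ω = z ∧ R ω = true) ∧ (U ω = u' ∧ X ω = x))
              * cex p (fun ω => h (W ω) x) (fun ω => U ω = u' ∧ X ω = x) :=
        OBI.tower p hp T0 W U X (fun ω => Z ω = z ∧ R ω = true) x (fun _ w => h w x)
          (fun s w u' => hcrossZ z x s w u')
      have towB : OBI.nsum p (fun ω => if T0 ω ≤ t then (1 : ℝ) else 0)
            (fun ω => (Z ω = z ∧ R ω = true) ∧ X ω = x)
          = ∑ u', pr p (fun ω => (Z ω = z ∧ R ω = true) ∧ (U ω = u' ∧ X ω = x))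
              * cex p (fun ω => if T0 ω ≤ t then (1 : ℝ) else 0) (fun ω => U ω = u' ∧ X ω = x) :=
        OBI.tower p hp T0 W U X (fun ω => Z ω = z ∧ R ω = true) x
          (fun s _ => if s ≤ t then (1 : ℝ) else 0) (fun s w u' => hcrossZ z x s w u')
      have numA : OBI.nsum p (fun ω => h (W ω) (X ω)) (fun ω => Z ω = z ∧ X ω = x ∧ R ω = true)
          = ∑ u', pr p (fun ω => (Z ω = z ∧ R ω = true) ∧ (U ω = u' ∧ X ω = x))
              * cex p (fun ω => h (W ω) x) (fun ω => U ω = u' ∧ X ω = x) := by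
        rw [← towA]
        exact OBI.nsum_congr p (fun ω => by tauto) (fun ω hω => by rw [hω.2.1])
      have numB : pr p (fun ω => T0 ω ≤ t ∧ (Z ω = z ∧ X ω = x ∧ R ω = true))
          = ∑ u', pr p (fun ω => (Z ω = z ∧ R ω = true) ∧ (U ω = u' ∧ X ω = x))
              * cex p (fun ω => if T0 ω ≤ t then (1 : ℝ) else 0) (fun ω => U ω = u' ∧ X ω = x) := by
        rw [← towB, ← OBI.nsum_indicator p (fun ω => T0 ω ≤ t) (fun ω => Z ω = z ∧ X ω = x ∧ R ω = true)]
        exact OBI.nsum_congr p (fun ω => by tauto) (fun ω _ => rfl)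
      have hfibU : OBI.nsum p (fun ω =>
            cex p (fun ω' => h (W ω') (X ω')) (fun ω' => U ω' = U ω ∧ X ω' = x)
              - cpr p (fun ω' => T0 ω' ≤ t) (fun ω' => U ω' = U ω ∧ X ω' = x))
          (fun ω => Z ω = z ∧ X ω = x ∧ R ω = true)
          = ∑ u', (cex p (fun ω' => h (W ω') (X ω')) (fun ω' => U ω' = u' ∧ X ω' = x)
              - cpr p (fun ω' => T0 ω' ≤ t) (fun ω' => U ω' = u' ∧ X ω' = x))
              * pr p (fun ω => U ω = u' ∧ (Z ω = z ∧ X ω = x ∧ R ω = true)) :=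
        OBI.nsum_fiber p U Finset.univ (fun ω => Finset.mem_univ _)
          (fun u' => cex p (fun ω' => h (W ω') (X ω')) (fun ω' => U ω' = u' ∧ X ω' = x)
            - cpr p (fun ω' => T0 ω' ≤ t) (fun ω' => U ω' = u' ∧ X ω' = x)) _
      have per_u : ∀ u' ∈ (Finset.univ : Finset 𝒰),
          (cex p (fun ω' => h (W ω') (X ω')) (fun ω' => U ω' = u' ∧ X ω' = x)
            - cpr p (fun ω' => T0 ω' ≤ t) (fun ω' => U ω' = u' ∧ X ω' = x))
            * pr p (fun ω => U ω = u' ∧ (Z ω = z ∧ X ω = x ∧ R ω = true))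
          = pr p (fun ω => (Z ω = z ∧ R ω = true) ∧ (U ω = u' ∧ X ω = x))
              * cex p (fun ω => h (W ω) x) (fun ω => U ω = u' ∧ X ω = x)
            - pr p (fun ω => (Z ω = z ∧ R ω = true) ∧ (U ω = u' ∧ X ω = x))
              * cex p (fun ω => if T0 ω ≤ t then (1 : ℝ) else 0) (fun ω => U ω = u' ∧ X ω = x) := by
        intro u' _
        have eP : pr p (fun ω => U ω = u' ∧ (Z ω = z ∧ X ω = x ∧ R ω = true))
            = pr p (fun ω => (Z ω = z ∧ R ω = true) ∧ (U ω = u' ∧ X ω = x)) :=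
          OBI.pr_congr p fun ω => by tauto
        have eA : cex p (fun ω' => h (W ω') (X ω')) (fun ω' => U ω' = u' ∧ X ω' = x)
            = cex p (fun ω => h (W ω) x) (fun ω => U ω = u' ∧ X ω = x) :=
          OBI.cex_congr p fun ω hω => by rw [hω.2]
        have eB : cpr p (fun ω' => T0 ω' ≤ t) (fun ω' => U ω' = u' ∧ X ω' = x)
            = cex p (fun ω => if T0 ω ≤ t then (1 : ℝ) else 0) (fun ω => U ω = u' ∧ X ω = x) :=
          (OBI.cex_indicator p _ _).symm
        rw [eP, eA, eB]
        ring
      have c1 : OBI.nsum p (fun ω => h (W ω) (X ω)) (fun ω => Z ω = z ∧ X ω = x ∧ R ω = true)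
          = cex p (fun ω => h (W ω) (X ω)) (fun ω => Z ω = z ∧ X ω = x ∧ R ω = true)
            * pr p (fun ω => Z ω = z ∧ X ω = x ∧ R ω = true) := by
        rw [OBI.cex_eq, div_mul_cancel₀ _ hEne]
      have c2 : pr p (fun ω => T0 ω ≤ t ∧ (Z ω = z ∧ X ω = x ∧ R ω = true))
          = cpr p (fun ω => T0 ω ≤ t) (fun ω => Z ω = z ∧ X ω = x ∧ R ω = true)
            * pr p (fun ω => Z ω = z ∧ X ω = x ∧ R ω = true) := by
        rw [OBI.cpr_eq, div_mul_cancel₀ _ hEne]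
      rw [OBI.cex_eq, hfibU, Finset.sum_congr rfl per_u, Finset.sum_sub_distrib,
        ← numA, ← numB, c1, c2, (hBridge z x hEz).symm.trans (stepA z x hEz), sub_self, zero_div]
    have h0 := hComp x
      (fun u' => cex p (fun ω' => h (W ω') (X ω')) (fun ω' => U ω' = u' ∧ X ω' = x)
        - cpr p (fun ω' => T0 ω' ≤ t) (fun ω' => U ω' = u' ∧ X ω' = x)) key u hu
    exact sub_eq_zero.mp h0
  -- final assembly
  have hL : pr p (fun ω => T0 ω ≤ t ∧ R ω = false)
      = ∑ x : 𝒳, ∑ u : 𝒰,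
          pr p (fun ω => R ω = false ∧ (U ω = u ∧ X ω = x))
            * cex p (fun ω => if T0 ω ≤ t then (1 : ℝ) else 0) (fun ω => U ω = u ∧ X ω = x) := by
    rw [← OBI.nsum_indicator p (fun ω => T0 ω ≤ t) (fun ω => R ω = false),
      OBI.nsum_split p X (fun ω => if T0 ω ≤ t then (1 : ℝ) else 0) (fun ω => R ω = false)]
    refine Finset.sum_congr rfl fun x _ => ?_
    have h2 : OBI.nsum p (fun ω => if T0 ω ≤ t then (1 : ℝ) else 0) (fun ω => X ω = x ∧ R ω = false)
        = OBI.nsum p (fun ω => if T0 ω ≤ t then (1 : ℝ) else 0) (fun ω => R ω = false ∧ X ω = x) :=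
      OBI.nsum_congr p (fun ω => by tauto) (fun ω _ => rfl)
    rw [h2]
    exact OBI.tower p hp T0 W U X (fun ω => R ω = false) x
      (fun s _ => if s ≤ t then (1 : ℝ) else 0) (fun s w u => hcrossR x s w u)
  have hR : OBI.nsum p (fun ω => h (W ω) (X ω)) (fun ω => R ω = false)
      = ∑ x : 𝒳, ∑ u : 𝒰,
          pr p (fun ω => R ω = false ∧ (U ω = u ∧ X ω = x))
            * cex p (fun ω => h (W ω) (X ω)) (fun ω => U ω = u ∧ X ω = x) := by
    rw [OBI.nsum_split p X (fun ω => h (W ω) (X ω)) (fun ω => R ω = false)]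
    refine Finset.sum_congr rfl fun x _ => ?_
    have h2 : OBI.nsum p (fun ω => h (W ω) (X ω)) (fun ω => X ω = x ∧ R ω = false)
        = OBI.nsum p (fun ω => h (W ω) x) (fun ω => R ω = false ∧ X ω = x) :=
      OBI.nsum_congr p (fun ω => by tauto) (fun ω hω => by rw [hω.1])
    rw [h2, OBI.tower p hp T0 W U X (fun ω => R ω = false) x (fun _ w => h w x)
      (fun s w u => hcrossR x s w u)]
    refine Finset.sum_congr rfl fun u _ => ?_
    have h4 : cex p (fun ω => h (W ω) x) (fun ω => U ω = u ∧ X ω = x)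
        = cex p (fun ω => h (W ω) (X ω)) (fun ω => U ω = u ∧ X ω = x) :=
      OBI.cex_congr p fun ω hω => by rw [hω.2]
    rw [h4]
  rw [OBI.cpr_eq, OBI.cex_eq, hL, hR]
  congr 1
  refine Finset.sum_congr rfl fun x _ => Finset.sum_congr rfl fun u _ => ?_
  rcases (OBI.pr_nonneg p hp (fun ω => R ω = false ∧ (U ω = u ∧ X ω = x))).eq_or_lt with h0 | h0
  · rw [← h0, zero_mul, zero_mul]
  · have hpos1 : 0 < pr p (fun ω => U ω = u ∧ X ω = x ∧ R ω = false) := by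
      have e := OBI.pr_congr p
        (show ∀ ω, (R ω = false ∧ (U ω = u ∧ X ω = x)) ↔ (U ω = u ∧ X ω = x ∧ R ω = false)
          from fun ω => by tauto)
      rw [← e]
      exact h0
    have hsb := stepB x u (hPos u x hpos1)
    rw [OBI.cex_indicator p (fun ω => T0 ω ≤ t) (fun ω => U ω = u ∧ X ω = x), ← hsb]
end
end

section
/- Robustness of the augmented (doubly robust) identification formula to misspecification of the treatment bridge (part of Theorem 1, equation (5)): Let Y be a real random variable taking finitely many values, and suppose h : 𝒲 × 𝒳 → ℝ satisfies E[ Y − h(W, X) | Z = z, X = x, R = 1 ] = 0 for every (z, x) with P(Z = z, X = x, R = 1) > 0. Then for every function q : 𝒵 × 𝒳 → ℝ, E[ 1(R = 1)·q(Z, X)·(Y − h(W, X)) ] = 0; consequently, if P(R = 0) > 0, then (1/P(R = 0))·E[ 1(R = 1)·q(Z, X)·(Y − h(W, X)) + 1(R = 0)·h(W, X) ] = E[ h(W, X) | R = 0 ]. -/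
open Finset

noncomputable section

open scoped Classical

variable {Ω : Type*} [Fintype Ω]

/-- Robustness of the augmented (doubly robust) identification formula to
misspecification of the treatment bridge (part of Theorem 1, equation (5)). -/
theorem dr_robust_to_treatment_bridge
    {𝒳 𝒵 𝒲 : Type*} [Fintype 𝒳] [Fintype 𝒵] [Fintype 𝒲]
    (p : Ω → ℝ) (hp : ∀ ω, 0 ≤ p ω) (hp1 : ∑ ω, p ω = 1)
    (R : Ω → Bool) (X : Ω → 𝒳) (Z : Ω → 𝒵) (W : Ω → 𝒲)
    (Y : Ω → ℝ) (h : 𝒲 → 𝒳 → ℝ)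
    (hBridge : ∀ (z : 𝒵) (x : 𝒳), 0 < pr p (fun ω => Z ω = z ∧ X ω = x ∧ R ω = true) →
      cex p (fun ω => Y ω - h (W ω) (X ω)) (fun ω => Z ω = z ∧ X ω = x ∧ R ω = true) = 0) :
    ∀ q : 𝒵 → 𝒳 → ℝ,
      ex p (fun ω => (if R ω = true then (1 : ℝ) else 0) * q (Z ω) (X ω)
          * (Y ω - h (W ω) (X ω))) = 0
      ∧ (0 < pr p (fun ω => R ω = false) →
          (1 / pr p (fun ω => R ω = false))
            * ex p (fun ω => (if R ω = true then (1 : ℝ) else 0) * q (Z ω) (X ω)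
                * (Y ω - h (W ω) (X ω))
              + (if R ω = false then (1 : ℝ) else 0) * h (W ω) (X ω))
          = cex p (fun ω => h (W ω) (X ω)) (fun ω => R ω = false)) := by
  intro q
  -- numerator of cex over each (z,x) cell is zero
  have hN : ∀ (z : 𝒵) (x : 𝒳),
      (∑ ω, if (Z ω = z ∧ X ω = x ∧ R ω = true) then p ω * (Y ω - h (W ω) (X ω)) else 0) = 0 := by
    intro z x
    by_cases hpr : 0 < pr p (fun ω => Z ω = z ∧ X ω = x ∧ R ω = true)
    · have h0 := hBridge z x hpr
      unfold cex at h0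
      have h1 := (div_eq_zero_iff.mp h0).resolve_right (ne_of_gt hpr)
      convert h1 using 2 with ω hω
      by_cases hc : (Z ω = z ∧ X ω = x ∧ R ω = true) <;> simp [hc]
    · -- pr = 0 hence p ω = 0 on the cell
      have hzero : ∀ ω, (Z ω = z ∧ X ω = x ∧ R ω = true) → p ω = 0 := by
        intro ω hω
        by_contra hne
        have hpos : 0 < p ω := lt_of_le_of_ne (hp ω) (Ne.symm hne)
        apply hpr
        unfold pr
        refine Finset.sum_pos' (fun i _ => ?_) ⟨ω, Finset.mem_univ ω, ?_⟩
        · by_cases hc : (Z i = z ∧ X i = x ∧ R i = true) <;> simp [hc, hp i]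
        · simp [hω, hpos]
      apply Finset.sum_eq_zero
      intro ω _
      by_cases hω : (Z ω = z ∧ X ω = x ∧ R ω = true)
      · simp [hω, hzero ω hω]
      · simp [hω]
  have hmain : ex p (fun ω => (if R ω = true then (1 : ℝ) else 0) * q (Z ω) (X ω)
      * (Y ω - h (W ω) (X ω))) = 0 := by
    unfold ex
    have hterm : ∀ ω, p ω * ((if R ω = true then (1 : ℝ) else 0) * q (Z ω) (X ω)
        * (Y ω - h (W ω) (X ω)))
        = ∑ z, ∑ x, if (Z ω = z ∧ X ω = x ∧ R ω = true) then
            q z x * (p ω * (Y ω - h (W ω) (X ω))) else 0 := by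
      intro ω
      rw [Finset.sum_eq_single (Z ω), Finset.sum_eq_single (X ω)]
      · by_cases hR : R ω = true <;> simp [hR] <;> ring
      · intro b _ hb
        have hc : ¬ (Z ω = Z ω ∧ X ω = b ∧ R ω = true) := fun hc => hb hc.2.1.symm
        rw [if_neg hc]
      · simp
      · intro b _ hb
        apply Finset.sum_eq_zero; intro x _
        have : ¬ (Z ω = b ∧ X ω = x ∧ R ω = true) := fun hc => hb hc.1.symm
        simp [this]
      · simp
    calc (∑ ω, p ω * ((if R ω = true then (1 : ℝ) else 0) * q (Z ω) (X ω)
          * (Y ω - h (W ω) (X ω))))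
        = ∑ ω, ∑ z, ∑ x, (if (Z ω = z ∧ X ω = x ∧ R ω = true) then
            q z x * (p ω * (Y ω - h (W ω) (X ω))) else 0) := by
          exact Finset.sum_congr rfl (fun ω _ => hterm ω)
      _ = ∑ z, ∑ x, ∑ ω, (if (Z ω = z ∧ X ω = x ∧ R ω = true) then
            q z x * (p ω * (Y ω - h (W ω) (X ω))) else 0) := by
          rw [Finset.sum_comm]
          exact Finset.sum_congr rfl (fun z _ => Finset.sum_comm)
      _ = ∑ z, ∑ x, q z x * ∑ ω, (if (Z ω = z ∧ X ω = x ∧ R ω = true) then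
            p ω * (Y ω - h (W ω) (X ω)) else 0) := by
          refine Finset.sum_congr rfl fun z _ => Finset.sum_congr rfl fun x _ => ?_
          rw [Finset.mul_sum]
          exact Finset.sum_congr rfl fun ω _ => by split <;> simp
      _ = 0 := by
          refine Finset.sum_eq_zero fun z _ => Finset.sum_eq_zero fun x _ => ?_
          rw [hN z x, mul_zero]
  refine ⟨hmain, fun hF => ?_⟩
  have hsplit : ex p (fun ω => (if R ω = true then (1 : ℝ) else 0) * q (Z ω) (X ω)
        * (Y ω - h (W ω) (X ω))
      + (if R ω = false then (1 : ℝ) else 0) * h (W ω) (X ω))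
      = ex p (fun ω => (if R ω = true then (1 : ℝ) else 0) * q (Z ω) (X ω)
        * (Y ω - h (W ω) (X ω)))
      + ex p (fun ω => (if R ω = false then (1 : ℝ) else 0) * h (W ω) (X ω)) := by
    unfold ex
    rw [← Finset.sum_add_distrib]
    exact Finset.sum_congr rfl fun ω _ => by ring
  rw [hsplit, hmain, zero_add]
  unfold ex cex
  have : (∑ ω, p ω * ((if R ω = false then (1:ℝ) else 0) * h (W ω) (X ω)))
      = ∑ ω, if R ω = false then p ω * h (W ω) (X ω) else 0 := by
    exact Finset.sum_congr rfl fun ω _ => by by_cases hR : R ω = false <;> simp [hR]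
  rw [this]
  field_simp
end
end

section
/- Robustness of the augmented (doubly robust) identification formula to misspecification of the outcome bridge (part of Theorem 1, equation (5)): Suppose P(W = w, X = x, R = 1) > 0 for every (w, x) with P(W = w, X = x) > 0, and suppose q : 𝒵 × 𝒳 → ℝ satisfies, for every (w, x) with P(W = w, X = x) > 0, P(R = 0 | W = w, X = x) = P(R = 1 | W = w, X = x)·E[ q(Z, X) | W = w, X = x, R = 1 ]. Then for every function h : 𝒲 × 𝒳 → ℝ, E[ 1(R = 1)·q(Z, X)·h(W, X) ] = E[ 1(R = 0)·h(W, X) ]. -/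
open Finset

noncomputable section

open scoped Classical

variable {Ω : Type*} [Fintype Ω]

lemma pr_zero_of_nonneg {p : Ω → ℝ} (hp : ∀ ω, 0 ≤ p ω) {B : Ω → Prop}
    (hB : pr p B = 0) : ∀ ω, B ω → p ω = 0 := by
  intro ω hω
  have := (Finset.sum_eq_zero_iff_of_nonneg (fun i _ => by
    by_cases h : B i <;> simp [h, hp i])).mp hB ω (Finset.mem_univ ω)
  simpa [hω] using this

/-- Robustness of the augmented (doubly robust) identification formula to
misspecification of the outcome bridge (part of Theorem 1, equation (5)). -/
theorem dr_robust_to_outcome_bridge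
    {𝒳 𝒵 𝒲 : Type*} [Fintype 𝒳] [Fintype 𝒵] [Fintype 𝒲]
    (p : Ω → ℝ) (hp : ∀ ω, 0 ≤ p ω) (hp1 : ∑ ω, p ω = 1)
    (R : Ω → Bool) (X : Ω → 𝒳) (Z : Ω → 𝒵) (W : Ω → 𝒲)
    (q : 𝒵 → 𝒳 → ℝ)
    (hWpos : ∀ (w : 𝒲) (x : 𝒳), 0 < pr p (fun ω => W ω = w ∧ X ω = x) →
      0 < pr p (fun ω => W ω = w ∧ X ω = x ∧ R ω = true))
    (hq : ∀ (w : 𝒲) (x : 𝒳), 0 < pr p (fun ω => W ω = w ∧ X ω = x) →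
      cpr p (fun ω => R ω = false) (fun ω => W ω = w ∧ X ω = x)
        = cpr p (fun ω => R ω = true) (fun ω => W ω = w ∧ X ω = x)
          * cex p (fun ω => q (Z ω) (X ω)) (fun ω => W ω = w ∧ X ω = x ∧ R ω = true)) :
    ∀ h : 𝒲 → 𝒳 → ℝ,
      ex p (fun ω => (if R ω = true then (1 : ℝ) else 0) * q (Z ω) (X ω) * h (W ω) (X ω))
        = ex p (fun ω => (if R ω = false then (1 : ℝ) else 0) * h (W ω) (X ω)) := by
  intro h
  -- key pointwise (per (w,x)) identity
  have key : ∀ (w : 𝒲) (x : 𝒳),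
      (∑ ω, if W ω = w ∧ X ω = x then
          p ω * ((if R ω = true then (1 : ℝ) else 0) * q (Z ω) (X ω)) else 0)
      = ∑ ω, if W ω = w ∧ X ω = x then
          p ω * (if R ω = false then (1 : ℝ) else 0) else 0 := by
    intro w x
    by_cases hA : 0 < pr p (fun ω => W ω = w ∧ X ω = x)
    · have hPr1 := hWpos w x hA
      have heq := hq w x hA
      have hA0 : pr p (fun ω => W ω = w ∧ X ω = x) ≠ 0 := ne_of_gt hA
      have hP10 : pr p (fun ω => W ω = w ∧ X ω = x ∧ R ω = true) ≠ 0 := ne_of_gt hPr1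
      rw [cpr, cpr, cex] at heq
      have e1 : pr p (fun ω => R ω = false ∧ W ω = w ∧ X ω = x)
          = ∑ ω, if W ω = w ∧ X ω = x then p ω * (if R ω = false then (1 : ℝ) else 0) else 0 := by
        rw [pr]
        apply Finset.sum_congr rfl
        intro ω _
        by_cases h1 : W ω = w ∧ X ω = x <;> by_cases h2 : R ω = false <;>
          simp [h1, h2]
      have e2 : (∑ ω, if W ω = w ∧ X ω = x ∧ R ω = true then p ω * q (Z ω) (X ω) else 0)
          = ∑ ω, if W ω = w ∧ X ω = x then
              p ω * ((if R ω = true then (1 : ℝ) else 0) * q (Z ω) (X ω)) else 0 := by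
        apply Finset.sum_congr rfl
        intro ω _
        by_cases h1 : W ω = w ∧ X ω = x <;> by_cases h2 : R ω = true <;>
          simp [h1, h2] <;> ring
      have e3 : pr p (fun ω => R ω = true ∧ W ω = w ∧ X ω = x)
          = pr p (fun ω => W ω = w ∧ X ω = x ∧ R ω = true) := by
        unfold pr
        apply Finset.sum_congr rfl
        intro ω _
        congr 1
        · exact propext (by tauto)
      rw [e1, e3] at heq
      field_simp at heq
      have e4 : (∑ ω, if W ω = w ∧ X ω = x then
            p ω * (if R ω = false then (1 : ℝ) else 0) else 0)
          = ∑ ω, if W ω = w ∧ X ω = x then (if R ω = false then p ω else 0) else 0 := by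
        apply Finset.sum_congr rfl
        intro ω _
        by_cases h1 : W ω = w ∧ X ω = x <;> by_cases h2 : R ω = false <;> simp [h1, h2]
      have hprod : pr p (fun ω => W ω = w ∧ X ω = x)
          * pr p (fun ω => W ω = w ∧ X ω = x ∧ R ω = true) ≠ 0 := mul_ne_zero hA0 hP10
      have heq' : (∑ ω, if W ω = w ∧ X ω = x then (if R ω = false then p ω else 0) else 0)
            * (pr p (fun ω => W ω = w ∧ X ω = x)
              * pr p (fun ω => W ω = w ∧ X ω = x ∧ R ω = true))
          = (∑ ω, if W ω = w ∧ X ω = x ∧ R ω = true then p ω * q (Z ω) (X ω) else 0)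
            * (pr p (fun ω => W ω = w ∧ X ω = x)
              * pr p (fun ω => W ω = w ∧ X ω = x ∧ R ω = true)) := by
        rw [← e4, heq]
      have h5 := mul_right_cancel₀ hprod heq'
      rw [← e2, e4, ← h5]
    · have hA0 : pr p (fun ω => W ω = w ∧ X ω = x) = 0 := by
        have hnn : 0 ≤ pr p (fun ω => W ω = w ∧ X ω = x) := by
          apply Finset.sum_nonneg
          intro ω _
          by_cases h1 : W ω = w ∧ X ω = x <;> simp [h1, hp ω]
        cases hnn.lt_or_eq with
        | inl hlt => exact absurd hlt hA
        | inr he => exact he.symm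
      have hz := pr_zero_of_nonneg hp hA0
      have z1 : (∑ ω, if W ω = w ∧ X ω = x then
          p ω * ((if R ω = true then (1 : ℝ) else 0) * q (Z ω) (X ω)) else 0) = 0 := by
        apply Finset.sum_eq_zero
        intro ω _
        by_cases h1 : W ω = w ∧ X ω = x
        · simp [h1, hz ω h1]
        · simp [h1]
      have z2 : (∑ ω, if W ω = w ∧ X ω = x then
          p ω * (if R ω = false then (1 : ℝ) else 0) else 0) = 0 := by
        apply Finset.sum_eq_zero
        intro ω _
        by_cases h1 : W ω = w ∧ X ω = x
        · simp [h1, hz ω h1]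
        · simp [h1]
      rw [z1, z2]
  -- now expand both expectations as double sums over (w, x)
  have expand : ∀ f : Ω → ℝ,
      (∑ ω, p ω * (f ω * h (W ω) (X ω)))
      = ∑ w : 𝒲, ∑ x : 𝒳, h w x *
          ∑ ω, if W ω = w ∧ X ω = x then p ω * f ω else 0 := by
    intro f
    calc ∑ ω, p ω * (f ω * h (W ω) (X ω))
        = ∑ ω, ∑ w : 𝒲, ∑ x : 𝒳,
            if W ω = w ∧ X ω = x then h w x * (p ω * f ω) else 0 := by
          apply Finset.sum_congr rfl; intro ω _
          simp [ite_and, Finset.sum_ite_eq]; ring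
      _ = ∑ w : 𝒲, ∑ x : 𝒳, ∑ ω,
            if W ω = w ∧ X ω = x then h w x * (p ω * f ω) else 0 := by
          rw [Finset.sum_comm]
          apply Finset.sum_congr rfl; intro w _; rw [Finset.sum_comm]
      _ = ∑ w : 𝒲, ∑ x : 𝒳, h w x *
            ∑ ω, if W ω = w ∧ X ω = x then p ω * f ω else 0 := by
          apply Finset.sum_congr rfl; intro w _
          apply Finset.sum_congr rfl; intro x _
          rw [Finset.mul_sum]
          apply Finset.sum_congr rfl; intro ω _
          by_cases h1 : W ω = w ∧ X ω = x <;> simp [h1]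
  have L : ex p (fun ω => (if R ω = true then (1 : ℝ) else 0) * q (Z ω) (X ω) * h (W ω) (X ω))
      = ∑ ω, p ω * ((fun ω => (if R ω = true then (1 : ℝ) else 0) * q (Z ω) (X ω)) ω
          * h (W ω) (X ω)) := by
    unfold ex
    exact Finset.sum_congr rfl (fun ω _ => by ring)
  have Rr : ex p (fun ω => (if R ω = false then (1 : ℝ) else 0) * h (W ω) (X ω))
      = ∑ ω, p ω * ((fun ω => (if R ω = false then (1 : ℝ) else 0)) ω * h (W ω) (X ω)) := by
    rw [ex]
  rw [L, Rr, expand, expand]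
  apply Finset.sum_congr rfl; intro w _
  apply Finset.sum_congr rfl; intro x _
  rw [key w x]
end
end

section
/- A latent treatment bridge identifies the counterfactual placebo mean (treatment-bridge step in the proof of Theorem 1): Assume (i) Y₀ ⫫ (Z, R) | (U, X); (ii) positivity: P(U = u, X = x, R = 1) > 0 whenever P(U = u, X = x) > 0; (iii) q : 𝒵 × 𝒳 → ℝ satisfies the latent equation P(R = 0 | U = u, X = x)/P(R = 1 | U = u, X = x) = E[ q(Z, X) | U = u, X = x, R = 1 ] for every (u, x) with P(U = u, X = x) > 0; (iv) P(R = 0) > 0. Then (1/P(R = 0))·E[ 1(R = 1)·q(Z, X)·Y₀ ] = E[ Y₀ | R = 0 ]. -/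
open Finset

noncomputable section

open scoped Classical

variable {Ω : Type*} [Fintype Ω]

private lemma sum_partition' {α : Type*} [Fintype α] (g : Ω → α) (f : Ω → ℝ) :
    ∑ ω, f ω = ∑ a, ∑ ω, if g ω = a then f ω else 0 := by
  rw [Finset.sum_comm]
  refine Finset.sum_congr rfl fun ω _ => ?_
  simp [Finset.sum_ite_eq]

private lemma fiber_expand' {α : Type*} (s : Finset α) (g : Ω → α) (hg : ∀ ω, g ω ∈ s)
    (f : α → ℝ) (w : Ω → ℝ) :
    ∑ ω, w ω * f (g ω) = ∑ a ∈ s, f a * pr w (fun ω => g ω = a) := by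
  unfold pr
  have h : ∀ a ∈ s, f a * (∑ ω, (if g ω = a then w ω else 0))
      = ∑ ω, (if g ω = a then w ω * f (g ω) else 0) := by
    intro a _
    rw [Finset.mul_sum]
    refine Finset.sum_congr rfl fun ω _ => ?_
    by_cases h' : g ω = a
    · subst h'; simp [mul_comm]
    · simp [h']
  rw [Finset.sum_congr rfl h, Finset.sum_comm]
  refine Finset.sum_congr rfl fun ω _ => ?_
  rw [Finset.sum_eq_single_of_mem (g ω) (hg ω)]
  · simp
  · intro b _ hb
    simp only [ite_eq_right_iff]
    intro h'
    exact (hb h'.symm).elim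

private lemma factorize' {𝒵 : Type*} [Fintype 𝒵]
    (p : Ω → ℝ) (B : Ω → Prop) (Y0 : Ω → ℝ) (Z : Ω → 𝒵) (R : Ω → Bool)
    (hNC : ∀ (y : ℝ) (z : 𝒵) (r : Bool),
      pr p (fun ω => (Y0 ω = y ∧ (Z ω = z ∧ R ω = r)) ∧ B ω) * pr p B
        = pr p (fun ω => Y0 ω = y ∧ B ω)
          * pr p (fun ω => (Z ω = z ∧ R ω = r) ∧ B ω))
    (h : 𝒵 → Bool → ℝ) :
    (∑ ω, if B ω then p ω * (Y0 ω * h (Z ω) (R ω)) else 0) * pr p B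
      = (∑ ω, if B ω then p ω * Y0 ω else 0)
        * (∑ ω, if B ω then p ω * h (Z ω) (R ω) else 0) := by
  classical
  set w : Ω → ℝ := fun ω => if B ω then p ω else 0 with hw
  have e1 : ∀ F : Ω → ℝ, (∑ ω, if B ω then p ω * F ω else 0) = ∑ ω, w ω * F ω := by
    intro F; refine Finset.sum_congr rfl fun ω _ => ?_
    by_cases h' : B ω <;> simp [hw, h']
  set sY : Finset ℝ := Finset.image Y0 Finset.univ with hsY
  set sZR : Finset (𝒵 × Bool) := Finset.univ with hsZR
  set s : Finset (ℝ × 𝒵 × Bool) := sY ×ˢ sZR with hs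
  have hg : ∀ ω, (Y0 ω, Z ω, R ω) ∈ s := by
    intro ω; simp [hs, hsY, hsZR, Finset.mem_product]
  have hgY : ∀ ω, Y0 ω ∈ sY := fun ω => by simp [hsY]
  have hgZR : ∀ ω, (Z ω, R ω) ∈ sZR := fun ω => by simp [hsZR]
  have fib1 : ∀ a : ℝ × 𝒵 × Bool, pr w (fun ω => (Y0 ω, Z ω, R ω) = a)
      = pr p (fun ω => (Y0 ω = a.1 ∧ (Z ω = a.2.1 ∧ R ω = a.2.2)) ∧ B ω) := by
    intro a; unfold pr
    refine Finset.sum_congr rfl fun ω _ => ?_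
    simp only [hw, Prod.ext_iff]
    by_cases hB : B ω <;> by_cases h1 : Y0 ω = a.1 <;> by_cases h2 : Z ω = a.2.1 <;>
      by_cases h3 : R ω = a.2.2 <;> simp [hB, h1, h2, h3]
  have fibY : ∀ y : ℝ, pr w (fun ω => Y0 ω = y)
      = pr p (fun ω => Y0 ω = y ∧ B ω) := by
    intro y; unfold pr
    refine Finset.sum_congr rfl fun ω _ => ?_
    simp only [hw]
    by_cases hB : B ω <;> by_cases hE : Y0 ω = y <;> simp [hB, hE]
  have fibZR : ∀ a : 𝒵 × Bool, pr w (fun ω => (Z ω, R ω) = a)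
      = pr p (fun ω => (Z ω = a.1 ∧ R ω = a.2) ∧ B ω) := by
    intro a; unfold pr
    refine Finset.sum_congr rfl fun ω _ => ?_
    simp only [hw, Prod.ext_iff]
    by_cases hB : B ω <;> by_cases h2 : Z ω = a.1 <;>
      by_cases h3 : R ω = a.2 <;> simp [hB, h2, h3]
  rw [e1, e1, e1]
  rw [fiber_expand' s (fun ω => (Y0 ω, Z ω, R ω)) hg
        (fun a => a.1 * h a.2.1 a.2.2) w,
      fiber_expand' sY Y0 hgY (fun y => y) w,
      fiber_expand' sZR (fun ω => (Z ω, R ω)) hgZR (fun a => h a.1 a.2) w]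
  rw [Finset.sum_mul]
  rw [hs, Finset.sum_product]
  rw [Finset.sum_mul_sum]
  refine Finset.sum_congr rfl fun y hy => Finset.sum_congr rfl fun a ha => ?_
  simp only [fib1 (y, a), fibY y, fibZR a]
  linear_combination (y * h a.1 a.2) * hNC y a.1 a.2

/-- A latent treatment bridge identifies the counterfactual placebo mean
(treatment-bridge step in the proof of Theorem 1). -/
theorem latent_treatment_bridge_identifies
    {𝒳 𝒰 𝒵 : Type*} [Fintype 𝒳] [Fintype 𝒰] [Fintype 𝒵]
    (p : Ω → ℝ) (hp : ∀ ω, 0 ≤ p ω) (hp1 : ∑ ω, p ω = 1)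
    (R : Ω → Bool) (X : Ω → 𝒳) (U : Ω → 𝒰) (Z : Ω → 𝒵)
    (Y0 : Ω → ℝ) (q : 𝒵 → 𝒳 → ℝ)
    -- (i) negative control assumption: Y₀ ⫫ (Z, R) | (U, X)
    (hNC : ∀ (y : ℝ) (z : 𝒵) (r : Bool) (u : 𝒰) (x : 𝒳),
      0 < pr p (fun ω => U ω = u ∧ X ω = x) →
      cpr p (fun ω => Y0 ω = y ∧ (Z ω = z ∧ R ω = r)) (fun ω => U ω = u ∧ X ω = x)
        = cpr p (fun ω => Y0 ω = y) (fun ω => U ω = u ∧ X ω = x)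
          * cpr p (fun ω => Z ω = z ∧ R ω = r) (fun ω => U ω = u ∧ X ω = x))
    -- (ii) positivity
    (hPos : ∀ (u : 𝒰) (x : 𝒳),
      0 < pr p (fun ω => U ω = u ∧ X ω = x) →
      0 < pr p (fun ω => U ω = u ∧ X ω = x ∧ R ω = true))
    -- (iii) latent treatment bridge equation
    (hq : ∀ (u : 𝒰) (x : 𝒳), 0 < pr p (fun ω => U ω = u ∧ X ω = x) →
      cpr p (fun ω => R ω = false) (fun ω => U ω = u ∧ X ω = x)
          / cpr p (fun ω => R ω = true) (fun ω => U ω = u ∧ X ω = x)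
        = cex p (fun ω => q (Z ω) (X ω)) (fun ω => U ω = u ∧ X ω = x ∧ R ω = true))
    -- (iv)
    (hR0 : 0 < pr p (fun ω => R ω = false)) :
    (1 / pr p (fun ω => R ω = false))
        * ex p (fun ω => (if R ω = true then (1 : ℝ) else 0) * q (Z ω) (X ω) * Y0 ω)
      = cex p Y0 (fun ω => R ω = false) := by
  have key : ex p (fun ω => (if R ω = true then (1 : ℝ) else 0) * q (Z ω) (X ω) * Y0 ω)
      = ∑ ω, if R ω = false then p ω * Y0 ω else 0 := by
    unfold ex
    rw [sum_partition' (fun ω => (U ω, X ω))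
          (fun ω => p ω * ((if R ω = true then (1 : ℝ) else 0) * q (Z ω) (X ω) * Y0 ω)),
        sum_partition' (fun ω => (U ω, X ω))
          (fun ω => if R ω = false then p ω * Y0 ω else 0)]
    refine Finset.sum_congr rfl fun a _ => ?_
    obtain ⟨u, x⟩ := a
    obtain ⟨B, hB⟩ : ∃ B : Ω → Prop, B = fun ω => U ω = u ∧ X ω = x := ⟨_, rfl⟩
    set h1 : 𝒵 → Bool → ℝ := fun z r => (if r = true then (1 : ℝ) else 0) * q z x with hh1
    set h0 : 𝒵 → Bool → ℝ := fun _ r => if r = false then (1 : ℝ) else 0 with hh0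
    have L : (∑ ω, @ite ℝ ((U ω, X ω) = (u, x)) (Classical.propDecidable _)
          (p ω * ((if R ω = true then (1 : ℝ) else 0) * q (Z ω) (X ω) * Y0 ω)) 0)
        = ∑ ω, if B ω then p ω * (Y0 ω * h1 (Z ω) (R ω)) else 0 := by
      refine Finset.sum_congr rfl fun ω _ => ?_
      by_cases hu : U ω = u <;> by_cases hx : X ω = x <;>
        simp [hB, hh1, hu, hx, Prod.ext_iff] <;> ring
    have Rr : (∑ ω, @ite ℝ ((U ω, X ω) = (u, x)) (Classical.propDecidable _)
          (if R ω = false then p ω * Y0 ω else 0) 0)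
        = ∑ ω, if B ω then p ω * (Y0 ω * h0 (Z ω) (R ω)) else 0 := by
      refine Finset.sum_congr rfl fun ω _ => ?_
      by_cases hu : U ω = u <;> by_cases hx : X ω = x <;> by_cases hr : R ω = false <;>
        simp [hB, hh0, hu, hx, hr, Prod.ext_iff] <;> ring
    refine Eq.trans (Eq.trans L ?_) Rr.symm
    by_cases hP : 0 < pr p B
    · -- positive stratum
      have hPx : 0 < pr p (fun ω => U ω = u ∧ X ω = x) := hB ▸ hP
      have hPne : pr p B ≠ 0 := ne_of_gt hP
      have hNC' : ∀ (y : ℝ) (z : 𝒵) (r : Bool),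
          pr p (fun ω => (Y0 ω = y ∧ (Z ω = z ∧ R ω = r)) ∧ B ω) * pr p B
            = pr p (fun ω => Y0 ω = y ∧ B ω)
              * pr p (fun ω => (Z ω = z ∧ R ω = r) ∧ B ω) := by
        intro y z r
        have h3 := hNC y z r u x hPx
        simp only [cpr] at h3
        field_simp at h3
        have h4 : (pr p (fun ω => (Y0 ω = y ∧ (Z ω = z ∧ R ω = r)) ∧ B ω) * pr p B) * pr p B
            = (pr p (fun ω => Y0 ω = y ∧ B ω)
                * pr p (fun ω => (Z ω = z ∧ R ω = r) ∧ B ω)) * pr p B := by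
          simp only [hB]
          linear_combination (pr p fun ω => U ω = u ∧ X ω = x) * h3
        exact mul_right_cancel₀ hPne h4
      have eq1 := factorize' p B Y0 Z R hNC' h1
      have eq0 := factorize' p B Y0 Z R hNC' h0
      have hD : 0 < pr p (fun ω => U ω = u ∧ X ω = x ∧ R ω = true) := hPos u x hPx
      have hDne : pr p (fun ω => U ω = u ∧ X ω = x ∧ R ω = true) ≠ 0 := ne_of_gt hD
      have hprT : pr p (fun ω => R ω = true ∧ B ω)
          = pr p (fun ω => U ω = u ∧ X ω = x ∧ R ω = true) := by
        unfold pr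
        refine Finset.sum_congr rfl fun ω _ => ?_
        by_cases hu : U ω = u <;> by_cases hx : X ω = x <;> by_cases hr : R ω = true <;>
          simp [hB, hu, hx, hr]
      have hM0 : (∑ ω, if B ω then p ω * h0 (Z ω) (R ω) else 0)
          = pr p (fun ω => R ω = false ∧ B ω) := by
        unfold pr
        refine Finset.sum_congr rfl fun ω _ => ?_
        by_cases hbw : B ω <;> by_cases hr : R ω = false <;>
          simp [hbw, hh0, hr]
      have hcex : cex p (fun ω => q (Z ω) (X ω)) (fun ω => U ω = u ∧ X ω = x ∧ R ω = true)
          = (∑ ω, if B ω then p ω * h1 (Z ω) (R ω) else 0)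
            / pr p (fun ω => U ω = u ∧ X ω = x ∧ R ω = true) := by
        rw [cex]
        congr 1
        refine Finset.sum_congr rfl fun ω _ => ?_
        by_cases hu : U ω = u <;> by_cases hx : X ω = x <;> by_cases hr : R ω = true <;>
          simp [hB, hh1, hu, hx, hr]
      have hqx := hq u x hPx
      rw [← hB] at hqx
      rw [hcex] at hqx
      simp only [cpr] at hqx
      rw [hprT] at hqx
      have h7 : pr p (fun ω => R ω = false ∧ B ω)
          = ((pr p (fun ω => R ω = false ∧ B ω) / pr p B)
              / (pr p (fun ω => U ω = u ∧ X ω = x ∧ R ω = true) / pr p B))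
            * pr p (fun ω => U ω = u ∧ X ω = x ∧ R ω = true) := by
        field_simp
      rw [hqx] at h7
      rw [div_mul_cancel₀ _ hDne] at h7
      have hbridge : (∑ ω, if B ω then p ω * h1 (Z ω) (R ω) else 0)
          = (∑ ω, if B ω then p ω * h0 (Z ω) (R ω) else 0) := by
        rw [hM0]
        exact h7.symm
      have h8 : (∑ ω, if B ω then p ω * (Y0 ω * h1 (Z ω) (R ω)) else 0) * pr p B
          = (∑ ω, if B ω then p ω * (Y0 ω * h0 (Z ω) (R ω)) else 0) * pr p B := by
        rw [eq1, eq0, hbridge]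
      exact mul_right_cancel₀ hPne h8
    · -- null stratum: every weight in it vanishes
      have hP0 : pr p B = 0 := by
        have hle : 0 ≤ pr p B := Finset.sum_nonneg fun ω _ => by
          by_cases h' : B ω <;> simp [h', hp ω]
        rcases lt_or_eq_of_le hle with h | h
        · exact absurd h hP
        · exact h.symm
      have hzero : ∀ ω, B ω → p ω = 0 := by
        intro ω hBω
        have := (Finset.sum_eq_zero_iff_of_nonneg (fun ω _ => by
          by_cases h' : B ω <;> simp [h', hp ω] : ∀ ω ∈ Finset.univ,
            0 ≤ if B ω then p ω else 0)).mp hP0 ω (Finset.mem_univ ω)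
        simpa [hBω] using this
      rw [Finset.sum_eq_zero, Finset.sum_eq_zero]
      · intro ω _
        by_cases h' : B ω
        · simp [h', hzero ω h']
        · simp [h']
      · intro ω _
        by_cases h' : B ω
        · simp [h', hzero ω h']
        · simp [h']
  rw [cex, key]
  ring
end
end
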